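/- For a natural number j ≥ 2, if s_j = 1/j and s_k = ((j²-1)/j²)·(j/(k(k+1))) for k > j, then, with p = n - j + 1, one has ∑_{k=j}^n s_k = p/(n+1) + 1/((n+1)j). -/

import Mathlib

theorem improved_odd_slide_sum (j n : ℕ) (hj : 2 ≤ j) (hjn : j ≤ n) (p : ℕ)
    (hp : p = n - j + 1) :
    1 / (j : ℝ) +
      ∑ k ∈ Finset.Icc (j + 1) n, (((j : ℝ) ^ 2 - 1) / (j : ℝ) ^ 2) * ((j : ℝ) / (k * (k + 1)))
    = (p : ℝ) / (n + 1) + 1 / (((n : ℝ) + 1) * j) := by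
  have hj0 : (j : ℝ) ≠ 0 := by positivity
  have hpc : (p : ℝ) = (n : ℝ) - j + 1 := by
    subst hp; push_cast [Nat.sub_add_cancel, hjn]; ring
  rw [hpc]
  clear hp hpc p
  induction n, hjn using Nat.le_induction with
  | base =>
    simp only [Finset.Icc_self, Finset.Icc_eq_empty_of_lt (Nat.lt_succ_self j),
      Finset.sum_empty]
    have : (j : ℝ) + 1 ≠ 0 := by positivity
    field_simp
    ring
  | succ n hn ih =>
    rw [Finset.sum_Icc_succ_top (by omega : j + 1 ≤ n + 1), ← add_assoc, ih]
    have h1 : (n : ℝ) + 1 ≠ 0 := by positivity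
    have h2 : (n : ℝ) + 2 ≠ 0 := by positivity
    push_cast
    field_simp
    ring
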